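/- arXiv:1907.11906 — 4 statements merged into one kernel-verified Lean document; each statement's English description precedes it below -/
import Mathlib

section
/- Let K_p, K_d, K_o ∈ ℝ^{6×6} with K_o invertible, let m ≥ 6, let B ∈ ℝ^{6×m} and B⁺ ∈ ℝ^{m×6} satisfy B B⁺ = I₆, and set N = I_m − B⁺B. Let I, H̃, ζ, Ḣ̃, Ḧ_d ∈ ℝ^6 and c ∈ ℝ^6 (playing the role of Ȧf) be vectors satisfying Ḣ̃ = ζ − K_d H̃ − K_p I. Define ξ̇ = B⁺[Ḧ_d − (K_d + I₆)Ḣ̃ − (K_d + K_o⁻¹ + K_p)H̃ − K_p I − c] + N ξ̇₀ for an arbitrary ξ̇₀ ∈ ℝ^m, and define ζ̇ = c + B ξ̇ − Ḧ_d + K_d Ḣ̃ + K_p H̃. Then ζ̇ = −ζ − K_o⁻¹ H̃. -/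
open Matrix

/-- Substituting the control law (eq. `input_momentum`)
`ξ̇ = B⁺[Ḧ_d - (K_d + I)Ḣ̃ - (K_d + K_o⁻¹ + K_p)H̃ - K_p I - c] + N ξ̇₀`
(where `B B⁺ = I₆`, `N = I_m - B⁺B`, and `Ḣ̃ = ζ - K_d H̃ - K_p I`) into the
`ζ`-dynamics `ζ̇ = c + B ξ̇ - Ḧ_d + K_d Ḣ̃ + K_p H̃` yields the closed loop
`ζ̇ = -ζ - K_o⁻¹ H̃`. -/
theorem control_law_substitution_zeta_dynamics
    (m : ℕ) (hm : 6 ≤ m)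
    (Kp Kd Ko : Matrix (Fin 6) (Fin 6) ℝ) (hKo : IsUnit Ko.det)
    (B : Matrix (Fin 6) (Fin m) ℝ) (Bp : Matrix (Fin m) (Fin 6) ℝ)
    (hB : B * Bp = 1)
    (N : Matrix (Fin m) (Fin m) ℝ) (hN : N = 1 - Bp * B)
    (I H Z Hdot Hdd c : Fin 6 → ℝ)
    (hHdot : Hdot = Z - Kd *ᵥ H - Kp *ᵥ I)
    (ξdot₀ : Fin m → ℝ) (ξdot : Fin m → ℝ)
    (hξdot : ξdot =
      Bp *ᵥ (Hdd - (Kd + 1) *ᵥ Hdot - (Kd + Ko⁻¹ + Kp) *ᵥ H - Kp *ᵥ I - c)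
        + N *ᵥ ξdot₀)
    (Zdot : Fin 6 → ℝ)
    (hZdot : Zdot = c + B *ᵥ ξdot - Hdd + Kd *ᵥ Hdot + Kp *ᵥ H) :
    Zdot = -Z - Ko⁻¹ *ᵥ H := by
  have hBN : B * N = 0 := by
    rw [hN, Matrix.mul_sub, Matrix.mul_one, ← Matrix.mul_assoc, hB, Matrix.one_mul, sub_self]
  subst hZdot hξdot hHdot
  simp only [Matrix.mulVec_add, Matrix.mulVec_sub, Matrix.mulVec_mulVec, hB, hBN,
    Matrix.one_mulVec, Matrix.zero_mulVec, Matrix.add_mulVec, Matrix.sub_mulVec, ← Matrix.mul_assoc, Matrix.one_mul, add_mul, one_mul, Matrix.mul_one]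
  abel
end

section
/- Let n be a positive integer and let K_p, K_d, K_o ∈ ℝ^{n×n} be symmetric positive definite matrices. Let I, H̃, ζ : ℝ → ℝ^n be differentiable and satisfy the closed-loop system İ = H̃, Ḣ̃ = ζ − K_d H̃ − K_p I, ζ̇ = −ζ − K_o⁻¹ H̃. Then the function V(t) = ½ I(t)ᵀK_p I(t) + ½‖H̃(t)‖² + ½ ζ(t)ᵀK_o ζ(t) is differentiable with V′(t) = −H̃(t)ᵀK_d H̃(t) − ζ(t)ᵀK_o ζ(t) ≤ 0 for all t; in particular V is nonincreasing. -/
/-!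
`V` is a sum of three quadratic forms, so for symmetric `K_p`, `K_o` its derivative along the
flow is `H̃ᵀK_p I + (ζ - K_d H̃ - K_p I)ᵀH̃ - (ζ + K_o⁻¹H̃)ᵀK_o ζ`. Symmetry of `K_o` turns
`(K_o⁻¹H̃)ᵀK_o ζ` into `H̃ᵀζ`, so both cross terms `H̃ᵀK_p I` and `H̃ᵀζ` cancel and only the
dissipation `-H̃ᵀK_d H̃ - ζᵀK_o ζ ≤ 0` remains.
-/

open Matrix

section Algebra

variable {R ι : Type*} [CommRing R] [Fintype ι]

theorem Matrix.IsSymm.dotProduct_mulVec_comm {A : Matrix ι ι R} (hA : A.IsSymm)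
    (x y : ι → R) : x ⬝ᵥ A *ᵥ y = A *ᵥ x ⬝ᵥ y := by
  rw [dotProduct_comm, ← vecMul_transpose, hA.eq, ← dotProduct_mulVec, dotProduct_comm]

theorem Matrix.IsSymm.inv_mulVec_dotProduct_mulVec [DecidableEq ι] {A : Matrix ι ι R}
    (hA : A.IsSymm) (hA' : IsUnit A) (x y : ι → R) : A⁻¹ *ᵥ x ⬝ᵥ A *ᵥ y = x ⬝ᵥ y := by
  rw [hA.dotProduct_mulVec_comm, mulVec_mulVec,
    mul_nonsing_inv A ((isUnit_iff_isUnit_det A).1 hA'), one_mulVec]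

theorem closedLoop_lyapunov_rate_eq [DecidableEq ι] (Kp Kd Ko : Matrix ι ι R) (hKo : Ko.IsSymm)
    (hKo' : IsUnit Ko) (x h z : ι → R) :
    h ⬝ᵥ Kp *ᵥ x + (z - Kd *ᵥ h - Kp *ᵥ x) ⬝ᵥ h + (-z - Ko⁻¹ *ᵥ h) ⬝ᵥ Ko *ᵥ z
      = -(h ⬝ᵥ Kd *ᵥ h) - z ⬝ᵥ Ko *ᵥ z := by
  simp only [sub_dotProduct, neg_dotProduct, hKo.inv_mulVec_dotProduct_mulVec hKo',
    dotProduct_comm (Kd *ᵥ h) h, dotProduct_comm (Kp *ᵥ x) h, dotProduct_comm z h]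
  ring

end Algebra

section Derivatives

variable {𝕜 : Type*} [NontriviallyNormedField 𝕜] {ι m : Type*} [Fintype ι]
  {f g : 𝕜 → ι → 𝕜} {f' g' : ι → 𝕜} {t : 𝕜}

theorem HasDerivAt.dotProduct (hf : HasDerivAt f f' t) (hg : HasDerivAt g g' t) :
    HasDerivAt (fun s => f s ⬝ᵥ g s) (f' ⬝ᵥ g t + f t ⬝ᵥ g') t := by
  simp only [_root_.dotProduct, ← Finset.sum_add_distrib]
  exact HasDerivAt.fun_sum fun i _ => (hasDerivAt_pi.1 hf i).mul (hasDerivAt_pi.1 hg i)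

theorem HasDerivAt.mulVec (A : Matrix m ι 𝕜) (hf : HasDerivAt f f' t) :
    HasDerivAt (fun s => A *ᵥ f s) (A *ᵥ f') t :=
  hasDerivAt_pi.2 fun i =>
    HasDerivAt.fun_sum fun j _ => (hasDerivAt_pi.1 hf j).const_mul (A i j)

theorem HasDerivAt.dotProduct_mulVec_self {A : Matrix ι ι 𝕜} (hA : A.IsSymm)
    (hf : HasDerivAt f f' t) :
    HasDerivAt (fun s => f s ⬝ᵥ A *ᵥ f s) (2 * (f' ⬝ᵥ A *ᵥ f t)) t := by
  convert hf.dotProduct (hf.mulVec A) using 1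
  rw [hA.dotProduct_mulVec_comm (f t), dotProduct_comm (A *ᵥ f t), two_mul]

theorem HasDerivAt.dotProduct_self (hf : HasDerivAt f f' t) :
    HasDerivAt (fun s => f s ⬝ᵥ f s) (2 * (f' ⬝ᵥ f t)) t := by
  convert hf.dotProduct hf using 1
  rw [dotProduct_comm (f t), two_mul]

end Derivatives

theorem lyapunov_derivative_momentum_jerk_with_integral_general
    (n : ℕ) (Kp Kd Ko : Matrix (Fin n) (Fin n) ℝ)
    (hKp : Kp.PosDef) (hKd : Kd.PosDef) (hKo : Ko.PosDef)
    (I H Z : ℝ → (Fin n → ℝ))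
    (hI : ∀ t, HasDerivAt I (H t) t)
    (hH : ∀ t, HasDerivAt H (Z t - Kd *ᵥ H t - Kp *ᵥ I t) t)
    (hZ : ∀ t, HasDerivAt Z (-(Z t) - Ko⁻¹ *ᵥ H t) t) :
    (∀ t, HasDerivAt
        (fun s => (1/2) * (I s ⬝ᵥ (Kp *ᵥ I s)) + (1/2) * (H s ⬝ᵥ H s)
          + (1/2) * (Z s ⬝ᵥ (Ko *ᵥ Z s)))
        (-(H t ⬝ᵥ (Kd *ᵥ H t)) - Z t ⬝ᵥ (Ko *ᵥ Z t)) t)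
    ∧ (∀ t, -(H t ⬝ᵥ (Kd *ᵥ H t)) - Z t ⬝ᵥ (Ko *ᵥ Z t) ≤ 0)
    ∧ Antitone (fun s => (1/2) * (I s ⬝ᵥ (Kp *ᵥ I s)) + (1/2) * (H s ⬝ᵥ H s)
          + (1/2) * (Z s ⬝ᵥ (Ko *ᵥ Z s))) := by
  have hKpSymm : Kp.IsSymm := isHermitian_iff_isSymm.1 hKp.isHermitian
  have hKoSymm : Ko.IsSymm := isHermitian_iff_isSymm.1 hKo.isHermitian
  have hderiv : ∀ t, HasDerivAt
      (fun s => (1/2) * (I s ⬝ᵥ (Kp *ᵥ I s)) + (1/2) * (H s ⬝ᵥ H s)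
        + (1/2) * (Z s ⬝ᵥ (Ko *ᵥ Z s)))
      (-(H t ⬝ᵥ (Kd *ᵥ H t)) - Z t ⬝ᵥ (Ko *ᵥ Z t)) t := fun t => by
    refine ((((hI t).dotProduct_mulVec_self hKpSymm).const_mul (1/2)).add
      (((hH t).dotProduct_self).const_mul (1/2))).add
      (((hZ t).dotProduct_mulVec_self hKoSymm).const_mul (1/2)) |>.congr_deriv ?_
    rw [← closedLoop_lyapunov_rate_eq Kp Kd Ko hKoSymm hKo.isUnit]
    ring
  have hnonpos : ∀ t, -(H t ⬝ᵥ (Kd *ᵥ H t)) - Z t ⬝ᵥ (Ko *ᵥ Z t) ≤ 0 := fun t => by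
    have hKdH := hKd.posSemidef.dotProduct_mulVec_nonneg (H t)
    have hKoZ := hKo.posSemidef.dotProduct_mulVec_nonneg (Z t)
    simp only [star_trivial] at hKdH hKoZ
    linarith
  exact ⟨hderiv, hnonpos, antitone_of_hasDerivAt_nonpos hderiv hnonpos⟩

/-- Lyapunov computation of Lemma 2: Along the closed-loop system
`İ = H̃`, `Ḣ̃ = ζ - K_d H̃ - K_p I`, `ζ̇ = -ζ - K_o⁻¹ H̃`, the function
`V(t) = ½ I(t)ᵀ K_p I(t) + ½‖H̃(t)‖² + ½ ζ(t)ᵀ K_o ζ(t)` is differentiable with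
`V'(t) = -H̃(t)ᵀ K_d H̃(t) - ζ(t)ᵀ K_o ζ(t) ≤ 0`; in particular `V` is nonincreasing.
(Here `‖v‖² = v ⬝ᵥ v` is the squared Euclidean norm.) -/
theorem lyapunov_derivative_momentum_jerk_with_integral
    (n : ℕ) (hn : 0 < n) (Kp Kd Ko : Matrix (Fin n) (Fin n) ℝ)
    (hKp : Kp.PosDef) (hKd : Kd.PosDef) (hKo : Ko.PosDef)
    (I H Z : ℝ → (Fin n → ℝ))
    (hI : ∀ t, HasDerivAt I (H t) t)
    (hH : ∀ t, HasDerivAt H (Z t - Kd *ᵥ H t - Kp *ᵥ I t) t)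
    (hZ : ∀ t, HasDerivAt Z (-(Z t) - Ko⁻¹ *ᵥ H t) t) :
    (∀ t, HasDerivAt
        (fun s => (1/2) * (I s ⬝ᵥ (Kp *ᵥ I s)) + (1/2) * (H s ⬝ᵥ H s)
          + (1/2) * (Z s ⬝ᵥ (Ko *ᵥ Z s)))
        (-(H t ⬝ᵥ (Kd *ᵥ H t)) - Z t ⬝ᵥ (Ko *ᵥ Z t)) t)
    ∧ (∀ t, -(H t ⬝ᵥ (Kd *ᵥ H t)) - Z t ⬝ᵥ (Ko *ᵥ Z t) ≤ 0)
    ∧ Antitone (fun s => (1/2) * (I s ⬝ᵥ (Kp *ᵥ I s)) + (1/2) * (H s ⬝ᵥ H s)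
          + (1/2) * (Z s ⬝ᵥ (Ko *ᵥ Z s))) :=
  lyapunov_derivative_momentum_jerk_with_integral_general n Kp Kd Ko hKp hKd hKo I H Z hI hH hZ
end

section
/- Let n be a positive integer and let K_p, K_d, K_o ∈ ℝ^{n×n} be symmetric positive definite matrices. Then every eigenvalue λ ∈ ℂ of the real 3n×3n block matrix M = [[0, I_n, 0], [−K_p, −K_d, I_n], [0, −K_o⁻¹, −I_n]] satisfies Re(λ) < 0 (i.e. M is Hurwitz). -/
/-!
With `P = diag(K_p, I, K_o)` and `v = (x, y, z)`, one has
`Re (vᴴ P M v) = -Re (yᴴ K_d y) - Re (zᴴ K_o z)`: the cross terms `xᴴ K_p y - yᴴ K_p x` and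
`yᴴ z - zᴴ y` are imaginary and `K_o K_o⁻¹ = I`. For an eigenvector `M v = μ v` the left side is
`Re μ · vᴴ P v` with `vᴴ P v > 0`, so `Re μ ≤ 0`. Strictness holds because an eigenvector has
`z ≠ 0`: if `z = 0`, the last block row gives `K_o⁻¹ y = 0`, and then the middle one `K_p x = 0`.
-/

open Matrix
open scoped ComplexOrder

theorem Sum.smul_elim {M α β γ : Type*} [SMul M γ] (c : M) (f : α → γ) (g : β → γ) :
    c • Sum.elim f g = Sum.elim (c • f) (c • g) := by
  ext (_ | _) <;> rfl

namespace Matrix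

lemma map_nonsing_inv {n R S : Type*} [Fintype n] [DecidableEq n] [CommRing R] [CommRing S]
    (f : R →+* S) {A : Matrix n n R} (hA : IsUnit A.det) : A⁻¹.map f = (A.map f)⁻¹ := by
  refine (inv_eq_right_inv ?_).symm
  rw [← Matrix.map_mul, mul_nonsing_inv _ hA, Matrix.map_one _ f.map_zero f.map_one]

lemma exists_mulVec_eq_smul_of_mem_spectrum {n K : Type*} [Fintype n] [DecidableEq n] [Field K]
    {A : Matrix n n K} {μ : K} (h : μ ∈ spectrum K A) : ∃ v ≠ 0, A *ᵥ v = μ • v := by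
  rw [← spectrum_toLin', ← Module.End.hasEigenvalue_iff_mem_spectrum] at h
  obtain ⟨v, hv⟩ := h.exists_hasEigenvector
  exact ⟨v, hv.2, by simpa using hv.apply_eq_smul⟩

lemma IsHermitian.star_dotProduct_mulVec_comm {m R : Type*} [Fintype m] [CommRing R] [StarRing R]
    {A : Matrix m m R} (hA : A.IsHermitian) (x y : m → R) :
    star (star x ⬝ᵥ A *ᵥ y) = star y ⬝ᵥ A *ᵥ x := by
  rw [← star_dotProduct, star_mulVec, ← dotProduct_mulVec, hA.eq]

lemma PosDef.fromBlocks_zero_zero {m n R : Type*} [Fintype m] [Fintype n] [CommRing R]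
    [PartialOrder R] [StarRing R] [StarOrderedRing R] {A : Matrix m m R} {D : Matrix n n R}
    (hA : A.PosDef) (hD : D.PosDef) : (fromBlocks A 0 0 D).PosDef := by
  refine .of_dotProduct_mulVec_pos (hA.isHermitian.fromBlocks (by simp) hD.isHermitian)
    fun x hx ↦ ?_
  rw [← Sum.elim_comp_inl_inr x] at hx ⊢
  simp only [fromBlocks_mulVec, zero_mulVec, add_zero, zero_add, Function.star_sumElim,
    sumElim_dotProduct_sumElim]
  have hA_nonneg := hA.posSemidef.dotProduct_mulVec_nonneg (x ∘ Sum.inl)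
  have hD_nonneg := hD.posSemidef.dotProduct_mulVec_nonneg (x ∘ Sum.inr)
  by_cases hl : x ∘ Sum.inl = 0
  · have hr : x ∘ Sum.inr ≠ 0 := fun hr ↦ hx (by rw [hl, hr, Sum.elim_zero_zero])
    exact add_pos_of_nonneg_of_pos hA_nonneg (hD.dotProduct_mulVec_pos hr)
  · exact add_pos_of_pos_of_nonneg (hA.dotProduct_mulVec_pos hl) hD_nonneg

section Complexification

variable {m : Type*} [Fintype m]

lemma re_star_dotProduct_map_ofReal_mulVec (A : Matrix m m ℝ) (x : m → ℂ) :
    (star x ⬝ᵥ (A.map (↑) *ᵥ x)).re =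
      (fun i ↦ (x i).re) ⬝ᵥ (A *ᵥ fun i ↦ (x i).re) +
        (fun i ↦ (x i).im) ⬝ᵥ (A *ᵥ fun i ↦ (x i).im) := by
  simp only [dotProduct, mulVec, Finset.mul_sum, ← Finset.sum_add_distrib, Complex.re_sum]
  refine Finset.sum_congr rfl fun i _ ↦ Finset.sum_congr rfl fun j _ ↦ ?_
  simp

lemma PosDef.map_ofReal {A : Matrix m m ℝ} (hA : A.PosDef) : (A.map ((↑) : ℝ → ℂ)).PosDef := by
  have hherm : (A.map ((↑) : ℝ → ℂ)).IsHermitian := hA.isHermitian.map _ fun _ ↦ by simp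
  refine .of_dotProduct_mulVec_pos hherm fun x hx ↦
    RCLike.pos_iff.mpr ⟨?_, hherm.im_star_dotProduct_mulVec_self x⟩
  have hre_or_im : (fun i ↦ (x i).re) ≠ 0 ∨ (fun i ↦ (x i).im) ≠ 0 := by
    contrapose! hx
    ext i
    exact Complex.ext (congrFun hx.1 i) (congrFun hx.2 i)
  rw [RCLike.re_to_complex, re_star_dotProduct_map_ofReal_mulVec]
  have hnonneg (u : m → ℝ) : 0 ≤ u ⬝ᵥ A *ᵥ u := by
    simpa using hA.posSemidef.dotProduct_mulVec_nonneg u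
  have hpos {u : m → ℝ} (hu : u ≠ 0) : 0 < u ⬝ᵥ A *ᵥ u := by
    simpa using hA.dotProduct_mulVec_pos hu
  rcases hre_or_im with h | h
  · exact add_pos_of_pos_of_nonneg (hpos h) (hnonneg _)
  · exact add_pos_of_nonneg_of_pos (hnonneg _) (hpos h)

end Complexification

lemma re_lt_zero_of_lyapunov {m : Type*} [Fintype m] {A P : Matrix m m ℂ} (hP : P.PosDef)
    {μ : ℂ} {v : m → ℂ} (hv0 : v ≠ 0) (hv : A *ᵥ v = μ • v)
    (hdiss : (star v ⬝ᵥ P *ᵥ (A *ᵥ v)).re < 0) : μ.re < 0 := by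
  obtain ⟨hre, him⟩ := Complex.pos_iff.mp (hP.dotProduct_mulVec_pos hv0)
  rw [hv, mulVec_smul, dotProduct_smul, smul_eq_mul, Complex.mul_re, ← him, mul_zero, sub_zero]
    at hdiss
  exact neg_of_mul_neg_left hdiss hre.le

section ClosedLoop

variable {n R : Type*} [Fintype n] [DecidableEq n] [CommRing R]

noncomputable def closedLoopMatrix (Kp Kd Ko : Matrix n n R) :
    Matrix ((n ⊕ n) ⊕ n) ((n ⊕ n) ⊕ n) R :=
  fromBlocks (fromBlocks 0 1 (-Kp) (-Kd)) (fromRows 0 1) (fromCols 0 (-Ko⁻¹)) (-1)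

def closedLoopLyapunovMatrix (Kp Ko : Matrix n n R) : Matrix ((n ⊕ n) ⊕ n) ((n ⊕ n) ⊕ n) R :=
  fromBlocks (fromBlocks Kp 0 0 1) 0 0 Ko

variable {Kp Kd Ko : Matrix n n R}

lemma closedLoopMatrix_map {S : Type*} [CommRing S] (f : R →+* S) (hKo : IsUnit Ko.det) :
    (closedLoopMatrix Kp Kd Ko).map f = closedLoopMatrix (Kp.map f) (Kd.map f) (Ko.map f) := by
  simp [closedLoopMatrix, fromBlocks_map, fromRows_map, fromCols_map, Matrix.map_neg,
    map_nonsing_inv f hKo]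

lemma closedLoopMatrix_mulVec (x y z : n → R) :
    closedLoopMatrix Kp Kd Ko *ᵥ Sum.elim (Sum.elim x y) z =
      Sum.elim (Sum.elim y (-(Kp *ᵥ x) - Kd *ᵥ y + z)) (-(Ko⁻¹ *ᵥ y) - z) := by
  simp [closedLoopMatrix, fromBlocks_mulVec, fromRows_mulVec, ← Sum.elim_add_add, neg_mulVec,
    sub_eq_add_neg]

lemma closedLoopMatrix_mulVec_eq_smul_iff {μ : R} {x y z : n → R} :
    closedLoopMatrix Kp Kd Ko *ᵥ Sum.elim (Sum.elim x y) z = μ • Sum.elim (Sum.elim x y) z ↔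
      y = μ • x ∧ -(Kp *ᵥ x) - Kd *ᵥ y + z = μ • y ∧ -(Ko⁻¹ *ᵥ y) - z = μ • z := by
  rw [closedLoopMatrix_mulVec, Sum.smul_elim, Sum.smul_elim, Sum.elim_eq_iff, Sum.elim_eq_iff,
    and_assoc]

lemma eq_zero_of_closedLoopMatrix_mulVec_eq_smul (hKp : IsUnit Kp.det) (hKo : IsUnit Ko.det)
    {μ : R} {x y : n → R}
    (h : closedLoopMatrix Kp Kd Ko *ᵥ Sum.elim (Sum.elim x y) 0 =
      μ • Sum.elim (Sum.elim x y) 0) :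
    x = 0 ∧ y = 0 := by
  obtain ⟨-, hx, hy⟩ := closedLoopMatrix_mulVec_eq_smul_iff.mp h
  have hKo_inv : IsUnit Ko⁻¹ := (isUnit_iff_isUnit_det _).mpr (isUnit_nonsing_inv_det _ hKo)
  obtain rfl : y = 0 := mulVec_injective_of_isUnit hKo_inv (by simpa using hy)
  exact ⟨mulVec_injective_of_isUnit ((isUnit_iff_isUnit_det _).mpr hKp) (by simpa using hx), rfl⟩

lemma closedLoopLyapunovMatrix_mulVec (x y z : n → R) :
    closedLoopLyapunovMatrix Kp Ko *ᵥ Sum.elim (Sum.elim x y) z =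
      Sum.elim (Sum.elim (Kp *ᵥ x) y) (Ko *ᵥ z) := by
  simp [closedLoopLyapunovMatrix, fromBlocks_mulVec]

lemma closedLoopLyapunovMatrix_posDef [PartialOrder R] [StarRing R] [StarOrderedRing R]
    [NoZeroDivisors R] (hKp : Kp.PosDef) (hKo : Ko.PosDef) :
    (closedLoopLyapunovMatrix Kp Ko).PosDef :=
  (hKp.fromBlocks_zero_zero .one).fromBlocks_zero_zero hKo

end ClosedLoop

section ComplexClosedLoop

variable {n : Type*} [Fintype n] [DecidableEq n] {Kp Kd Ko : Matrix n n ℂ}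

lemma re_star_dotProduct_closedLoopLyapunovMatrix_mulVec (hKp : Kp.IsHermitian)
    (hKo : IsUnit Ko.det) (x y z : n → ℂ) :
    (star (Sum.elim (Sum.elim x y) z) ⬝ᵥ closedLoopLyapunovMatrix Kp Ko *ᵥ
        (closedLoopMatrix Kp Kd Ko *ᵥ Sum.elim (Sum.elim x y) z)).re =
      -(star y ⬝ᵥ Kd *ᵥ y).re - (star z ⬝ᵥ Ko *ᵥ z).re := by
  simp only [closedLoopMatrix_mulVec, closedLoopLyapunovMatrix_mulVec, Function.star_sumElim,
    sumElim_dotProduct_sumElim, mulVec_sub, mulVec_neg, mulVec_mulVec, mul_nonsing_inv _ hKo,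
    one_mulVec, dotProduct_add, dotProduct_sub, dotProduct_neg,
    ← hKp.star_dotProduct_mulVec_comm x y, star_dotProduct z y, Complex.add_re,
    Complex.sub_re, Complex.neg_re, Complex.star_def, Complex.conj_re]
  ring

theorem re_lt_zero_of_mem_spectrum_closedLoopMatrix (hKp : Kp.PosDef) (hKd : Kd.PosSemidef)
    (hKo : Ko.PosDef) {μ : ℂ} (hμ : μ ∈ spectrum ℂ (closedLoopMatrix Kp Kd Ko)) : μ.re < 0 := by
  obtain ⟨v, hv0, hv⟩ := exists_mulVec_eq_smul_of_mem_spectrum hμ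
  obtain ⟨x, y, z, rfl⟩ : ∃ x y z, v = Sum.elim (Sum.elim x y) z :=
    ⟨v ∘ Sum.inl ∘ Sum.inl, v ∘ Sum.inl ∘ Sum.inr, v ∘ Sum.inr, by ext ((_ | _) | _) <;> rfl⟩
  have hz : z ≠ 0 := by
    rintro rfl
    obtain ⟨rfl, rfl⟩ := eq_zero_of_closedLoopMatrix_mulVec_eq_smul hKp.det_pos.ne'.isUnit
      hKo.det_pos.ne'.isUnit hv
    exact hv0 (by rw [Sum.elim_zero_zero, Sum.elim_zero_zero])
  refine re_lt_zero_of_lyapunov (closedLoopLyapunovMatrix_posDef hKp hKo) hv0 hv ?_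
  rw [re_star_dotProduct_closedLoopLyapunovMatrix_mulVec hKp.isHermitian hKo.det_pos.ne'.isUnit]
  have hy_nonneg := hKd.re_dotProduct_nonneg y
  have hz_pos := hKo.re_dotProduct_pos hz
  rw [RCLike.re_to_complex] at hy_nonneg hz_pos
  linarith

end ComplexClosedLoop

end Matrix

theorem closed_loop_matrix_with_integral_isHurwitz_general
    (n : ℕ) (Kp Kd Ko : Matrix (Fin n) (Fin n) ℝ)
    (hKp : Kp.PosDef) (hKd : Kd.PosDef) (hKo : Ko.PosDef) :
    ∀ μ ∈ spectrum ℂ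
      ((fromBlocks
          (fromBlocks (0 : Matrix (Fin n) (Fin n) ℝ) 1 (-Kp) (-Kd))
          (fromRows (0 : Matrix (Fin n) (Fin n) ℝ) 1)
          (fromCols (0 : Matrix (Fin n) (Fin n) ℝ) (-Ko⁻¹))
          (-1)).map (Complex.ofReal)),
      μ.re < 0 := by
  intro μ hμ
  change μ ∈ spectrum ℂ ((closedLoopMatrix Kp Kd Ko).map Complex.ofRealHom) at hμ
  rw [closedLoopMatrix_map _ hKo.det_pos.ne'.isUnit] at hμ
  exact re_lt_zero_of_mem_spectrum_closedLoopMatrix hKp.map_ofReal hKd.map_ofReal.posSemidef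
    hKo.map_ofReal hμ

/-- For symmetric positive definite `K_p, K_d, K_o ∈ ℝ^{n×n}`, every
complex eigenvalue of the `3n×3n` block matrix
`M = [[0, I, 0], [-K_p, -K_d, I], [0, -K_o⁻¹, -I]]` has strictly negative real part,
i.e. `M` is Hurwitz. -/
theorem closed_loop_matrix_with_integral_isHurwitz
    (n : ℕ) (hn : 0 < n) (Kp Kd Ko : Matrix (Fin n) (Fin n) ℝ)
    (hKp : Kp.PosDef) (hKd : Kd.PosDef) (hKo : Ko.PosDef) :
    ∀ μ ∈ spectrum ℂ
      ((fromBlocks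
          (fromBlocks (0 : Matrix (Fin n) (Fin n) ℝ) 1 (-Kp) (-Kd))
          (fromRows (0 : Matrix (Fin n) (Fin n) ℝ) 1)
          (fromCols (0 : Matrix (Fin n) (Fin n) ℝ) (-Ko⁻¹))
          (-1)).map (Complex.ofReal)),
      μ.re < 0 :=
  closed_loop_matrix_with_integral_isHurwitz_general n Kp Kd Ko hKp hKd hKo
end

section
/- Let n be a positive integer, let P ∈ ℝ^{n×n} be symmetric positive definite, let M ∈ ℝ^{n×n}, and set Q = −(PM + MᵀP). Assume Q is positive semidefinite and that no nonzero complex eigenvector of M lies in the kernel of Q (viewing Q as acting on ℂⁿ, i.e. if Mv = λv with v ≠ 0 then v*Qv > 0). Then every eigenvalue λ ∈ ℂ of M satisfies Re(λ) < 0. -/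
/-!
For an eigenpair `M v = μ v`, the Lyapunov identity gives `v* Q v = -2 Re μ · v* P v`.
The left side is positive by hypothesis and `v* P v ≥ 0`, so `Re μ < 0`.
-/

open Matrix

section

variable {ι : Type*} [Fintype ι]

lemma Matrix.re_star_dotProduct_map_ofReal_mulVec_s14 (A : Matrix ι ι ℝ) (v : ι → ℂ) :
    (star v ⬝ᵥ (A.map Complex.ofReal *ᵥ v)).re =
      (fun i ↦ (v i).re) ⬝ᵥ A *ᵥ (fun i ↦ (v i).re) +
        (fun i ↦ (v i).im) ⬝ᵥ A *ᵥ (fun i ↦ (v i).im) := by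
  simp only [dotProduct, mulVec, Finset.mul_sum, Complex.re_sum, ← Finset.sum_add_distrib]
  refine Finset.sum_congr rfl fun i _ ↦ Finset.sum_congr rfl fun j _ ↦ ?_
  simp only [Pi.star_apply, map_apply, Complex.star_def, Complex.mul_re, Complex.mul_im,
    Complex.conj_re, Complex.conj_im, Complex.ofReal_re, Complex.ofReal_im]
  ring

lemma Matrix.PosSemidef.re_star_dotProduct_map_ofReal_mulVec_nonneg {A : Matrix ι ι ℝ}
    (hA : A.PosSemidef) (v : ι → ℂ) : 0 ≤ (star v ⬝ᵥ (A.map Complex.ofReal *ᵥ v)).re := by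
  rw [re_star_dotProduct_map_ofReal_mulVec_s14]
  exact add_nonneg (hA.dotProduct_mulVec_nonneg _) (hA.dotProduct_mulVec_nonneg _)

lemma Matrix.star_dotProduct_mul_add_conjTranspose_mul_mulVec {R : Type*} [CommRing R]
    [StarRing R] {A : Matrix ι ι R} {μ : R} {v : ι → R} (hv : A *ᵥ v = μ • v)
    (B : Matrix ι ι R) :
    star v ⬝ᵥ ((B * A + Aᴴ * B) *ᵥ v) = (μ + star μ) * (star v ⬝ᵥ (B *ᵥ v)) := by
  have hadj : star v ⬝ᵥ (Aᴴ *ᵥ (B *ᵥ v)) = star μ * (star v ⬝ᵥ (B *ᵥ v)) := by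
    rw [dotProduct_mulVec, vecMul_conjTranspose, star_star, hv, star_smul, smul_dotProduct,
      smul_eq_mul]
  rw [add_mulVec, ← mulVec_mulVec, ← mulVec_mulVec, dotProduct_add, hadj, hv, mulVec_smul,
    dotProduct_smul, smul_eq_mul, add_mul]

lemma Matrix.exists_mulVec_eq_smul_of_mem_spectrum_s14 {K : Type*} [Field K] [DecidableEq ι]
    {A : Matrix ι ι K} {μ : K} (hμ : μ ∈ spectrum K A) : ∃ v ≠ 0, A *ᵥ v = μ • v := by
  rw [← spectrum_toLin', ← Module.End.hasEigenvalue_iff_mem_spectrum] at hμ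
  obtain ⟨v, hv⟩ := hμ.exists_hasEigenvector
  exact ⟨v, hv.2, by simpa using Module.End.mem_eigenspace_iff.mp hv.1⟩

omit [Fintype ι] in
lemma Matrix.conjTranspose_map_ofReal (A : Matrix ι ι ℝ) :
    (A.map Complex.ofReal)ᴴ = Aᵀ.map Complex.ofReal := by
  ext i j; simp

end

theorem re_eigenvalue_neg_of_strict_lyapunov_general
    (n : ℕ) (P M Q : Matrix (Fin n) (Fin n) ℝ)
    (hP : P.PosDef)
    (hQ : Q = -(P * M + Mᵀ * P))
    (hQev : ∀ (μ : ℂ) (v : Fin n → ℂ), v ≠ 0 →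
      (M.map Complex.ofReal) *ᵥ v = μ • v →
      0 < (star v ⬝ᵥ ((Q.map Complex.ofReal) *ᵥ v)).re) :
    ∀ μ ∈ spectrum ℂ (M.map Complex.ofReal), μ.re < 0 := by
  intro μ hμ
  obtain ⟨v, hv0, hv⟩ := exists_mulVec_eq_smul_of_mem_spectrum_s14 hμ
  have hQc : Q.map Complex.ofReal = -(P.map Complex.ofReal * M.map Complex.ofReal +
      (M.map Complex.ofReal)ᴴ * P.map Complex.ofReal) := by
    rw [hQ, conjTranspose_map_ofReal, Matrix.map_neg _ Complex.ofReal_neg,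
      Matrix.map_add _ Complex.ofReal_add]
    exact congrArg _ (congrArg₂ _ (Matrix.map_mul (f := Complex.ofRealHom))
      (Matrix.map_mul (f := Complex.ofRealHom)))
  have hQv : (star v ⬝ᵥ (Q.map Complex.ofReal *ᵥ v)).re =
      -(2 * μ.re * (star v ⬝ᵥ (P.map Complex.ofReal *ᵥ v)).re) := by
    rw [hQc, neg_mulVec, dotProduct_neg, star_dotProduct_mul_add_conjTranspose_mul_mulVec hv,
      Complex.star_def, Complex.add_conj, Complex.neg_re, Complex.re_ofReal_mul]
  have hPv := hP.posSemidef.re_star_dotProduct_map_ofReal_mulVec_nonneg v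
  have hQpos := hQev μ v hv0 hv
  rw [hQv] at hQpos
  nlinarith

/-- strict Lyapunov eigenvalue lemma: Let `P` be symmetric positive
definite, `M` arbitrary, and `Q = -(PM + MᵀP)`. If `Q` is positive semidefinite and
no nonzero complex eigenvector of `M` lies in the kernel of `Q` (i.e. `Mv = λv` with
`v ≠ 0` implies `v*Qv > 0`), then every complex eigenvalue of `M` has strictly
negative real part. -/
theorem re_eigenvalue_neg_of_strict_lyapunov
    (n : ℕ) (hn : 0 < n) (P M Q : Matrix (Fin n) (Fin n) ℝ)
    (hP : P.PosDef)
    (hQ : Q = -(P * M + Mᵀ * P))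
    (hQpsd : Q.PosSemidef)
    (hQev : ∀ (μ : ℂ) (v : Fin n → ℂ), v ≠ 0 →
      (M.map Complex.ofReal) *ᵥ v = μ • v →
      0 < (star v ⬝ᵥ ((Q.map Complex.ofReal) *ᵥ v)).re) :
    ∀ μ ∈ spectrum ℂ (M.map Complex.ofReal), μ.re < 0 :=
  re_eigenvalue_neg_of_strict_lyapunov_general n P M Q hP hQ hQev
end
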